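/- arXiv:2404.18469 — 4 statements merged into one kernel-verified Lean document; each statement's English description precedes it below -/
import Mathlib

section
/- Let W be an M×n array (M ≥ k+1) whose columns W₁,…,W_n satisfy: for every set of k+1 consecutive rows, each word e in a fixed set E of (k+1)-tuples occurs as a column of that (k+1)×n sub-array exactly P(e)·n times, where Σ_{e∈E} P(e) = 1. If ρ is a permutation of [n] such that W_{ρ(j)} is extendable by W_{ρ(j+1)} for all j ∈ [n−1], then in the stitched word w = W_{ρ(1)}||⋯||W_{ρ(n)} of length N = nM − (n−1)k, every e ∈ E occurs as a substring exactly P(e)·n·(M−k) = P(e)·(N−k) times. -/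
/-- Left-associative stitching of a list of words, each stitch overlapping in `k`
symbols: `u‖v = u ++ (v.drop k)`. -/
def stitchFold {α : Type*} (k : ℕ) (L : List (List α)) : List α :=
  match L with
  | [] => []
  | h :: t => t.foldl (fun acc b => acc ++ b.drop k) h

/-!
Occurrence counts of `e` are additive under stitching: extendability makes `u ‖ v` end with all
of `v`, so a window of length `k + 1` starting before position `|u| - k` lies inside `u` and every
later one lies inside `v`. Hence the occurrences in the stitched word are those in the columns,
and counting them by window position instead of by column, each of the `M - k` positions
contributes the `P(e) · n` columns prescribed by the row condition.
-/

section Stitching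

variable {α : Type*}

def Extendable (k : ℕ) (u v : List α) : Prop :=
  u.drop (u.length - k) = v.take k

theorem stitchFold_cons (k : ℕ) (a : List α) (t : List (List α)) :
    stitchFold k (a :: t) = a ++ (t.map (·.drop k)).flatten := by
  simp [stitchFold]

theorem stitchFold_cons_cons (k : ℕ) (a b : List α) (t : List (List α)) (hb : k ≤ b.length) :
    stitchFold k (a :: b :: t) = a ++ (stitchFold k (b :: t)).drop k := by
  simp [stitchFold_cons, List.drop_append_of_le_length hb]

theorem take_stitchFold_cons (k : ℕ) (b : List α) (t : List (List α)) (hb : k ≤ b.length) :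
    (stitchFold k (b :: t)).take k = b.take k := by
  rw [stitchFold_cons, List.take_append_of_le_length hb]

theorem length_le_length_stitchFold_cons (k : ℕ) (b : List α) (t : List (List α)) :
    b.length ≤ (stitchFold k (b :: t)).length := by
  simp [stitchFold_cons]

end Stitching

section WindowCount

variable {α : Type*} [DecidableEq α]

def windowCount (k : ℕ) (e w : List α) : ℕ :=
  ((Finset.range (w.length - k)).filter (fun i => (w.drop i).take (k + 1) = e)).card

theorem windowCount_append_drop (k : ℕ) (e u v : List α) (hu : k ≤ u.length)
    (hv : k ≤ v.length) (huv : Extendable k u v) :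
    windowCount k e (u ++ v.drop k) = windowCount k e u + windowCount k e v := by
  have hlen : (u ++ v.drop k).length - k = (u.length - k) + (v.length - k) := by
    simp only [List.length_append, List.length_drop]; omega
  have hsuffix : (u ++ v.drop k).drop (u.length - k) = v := by
    rw [List.drop_append_of_le_length (by omega), huv, List.take_append_drop]
  unfold windowCount
  rw [hlen, Finset.card_filter, Finset.card_filter, Finset.card_filter, Finset.sum_range_add]
  congr 1
  · refine Finset.sum_congr rfl fun i hi => ?_
    rw [Finset.mem_range] at hi
    rw [List.drop_append_of_le_length (by omega),
      List.take_append_of_le_length (by simp only [List.length_drop]; omega)]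
  · refine Finset.sum_congr rfl fun i _ => ?_
    rw [← List.drop_drop, hsuffix]

theorem windowCount_stitchFold (k : ℕ) (e : List α) (L : List (List α))
    (hL : ∀ x ∈ L, k ≤ x.length) (hext : L.IsChain (Extendable k)) :
    windowCount k e (stitchFold k L) = (L.map (windowCount k e)).sum := by
  induction L with
  | nil => simp [stitchFold, windowCount]
  | cons a t ih =>
    rcases t with _ | ⟨b, t⟩
    · simp [stitchFold]
    obtain ⟨hab, hext⟩ := List.isChain_cons_cons.mp hext
    have hb : k ≤ b.length := hL b (by simp)
    rw [stitchFold_cons_cons k a b t hb,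
      windowCount_append_drop k e a _ (hL a (by simp))
        (hb.trans (length_le_length_stitchFold_cons k b t))
        (by rwa [Extendable, take_stitchFold_cons k b t hb]),
      ih (fun x hx => hL x (List.mem_cons_of_mem a hx)) hext]
    simp only [List.map_cons, List.sum_cons]

theorem sum_windowCount_eq_sum_card {ι : Type*} [Fintype ι] (k M : ℕ) (e : List α)
    (W : ι → List α) (hlen : ∀ j, (W j).length = M) :
    ∑ j, windowCount k e (W j) =
      ∑ r ∈ Finset.range (M - k),
        (Finset.univ.filter fun j => ((W j).drop r).take (k + 1) = e).card := by
  simp only [windowCount, hlen, Finset.card_filter]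
  exact Finset.sum_comm

end WindowCount

theorem cast_stitched_length_sub (k M n : ℕ) (hn : 1 ≤ n) (hM : k ≤ M) :
    ((n * M - (n - 1) * k : ℕ) : ℝ) - k = n * ((M : ℝ) - k) := by
  have hle : (n - 1) * k ≤ n * M :=
    (Nat.mul_le_mul_right k (Nat.sub_le n 1)).trans (Nat.mul_le_mul_left n hM)
  rw [Nat.cast_sub hle, Nat.cast_mul, Nat.cast_mul, Nat.cast_sub hn]
  ring

theorem stmt7_general {α : Type*} [DecidableEq α] (k M n : ℕ) (hn : 1 ≤ n) (hM : k + 1 ≤ M)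
    (E : Finset (List α))
    (P : List α → ℝ)
    (W : Fin n → List α) (hlen : ∀ j, (W j).length = M)
    (hA2 : ∀ r, r + (k + 1) ≤ M → ∀ e ∈ E,
      ((Finset.univ.filter
          (fun j : Fin n => ((W j).drop r).take (k + 1) = e)).card : ℝ) = P e * n)
    (ρ : Equiv.Perm (Fin n))
    (hext : ∀ j : Fin n, ∀ h : (j : ℕ) + 1 < n,
      (W (ρ j)).drop (M - k) = (W (ρ ⟨(j : ℕ) + 1, h⟩)).take k) :
    ∀ e ∈ E,
      (((Finset.range ((stitchFold k (List.ofFn fun j => W (ρ j))).length - k)).filter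
          (fun i => ((stitchFold k (List.ofFn fun j => W (ρ j))).drop i).take (k + 1)
            = e)).card : ℝ)
        = P e * n * ((M : ℝ) - k) ∧
      P e * n * ((M : ℝ) - k) = P e * (((n * M - (n - 1) * k : ℕ) : ℝ) - k) := by
  intro e he
  refine ⟨?_, by rw [cast_stitched_length_sub k M n hn (by omega)]; ring⟩
  have hchain : (List.ofFn fun j => W (ρ j)).IsChain (Extendable k) :=
    List.isChain_ofFn.mpr fun i hi => by
      rw [Extendable, hlen]; exact hext ⟨i, by omega⟩ hi
  have hcount : windowCount k e (stitchFold k (List.ofFn fun j => W (ρ j))) =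
      ∑ r ∈ Finset.range (M - k),
        (Finset.univ.filter fun j => ((W j).drop r).take (k + 1) = e).card := by
    rw [windowCount_stitchFold k e _ (by simp [List.mem_ofFn, hlen]; omega) hchain,
      List.map_ofFn, List.sum_ofFn, ← sum_windowCount_eq_sum_card k M e W hlen]
    exact Equiv.sum_comp ρ (fun j => windowCount k e (W j))
  change ((windowCount k e _ : ℕ) : ℝ) = _
  rw [hcount, Nat.cast_sum,
    Finset.sum_congr rfl fun r hr => hA2 r (by rw [Finset.mem_range] at hr; omega) e he,
    Finset.sum_const, Finset.card_range, nsmul_eq_mul, Nat.cast_sub (by omega)]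
  ring

/-- Let `W` be an `M×n` array (`M ≥ k+1`), given by its columns, such
that in every `(k+1)×n` sub-array of consecutive rows each `(k+1)`-tuple `e ∈ E`
occurs as a column exactly `P(e)·n` times (with `∑_{e∈E} P(e) = 1`).  If `ρ` is a
permutation of `[n]` with each column extendable by the next, then in the stitched
word `w = W_{ρ(1)}‖⋯‖W_{ρ(n)}` of length `N = nM − (n−1)k`, every `e ∈ E` occurs as
a substring exactly `P(e)·n·(M−k) = P(e)·(N−k)` times. -/
theorem stmt7 {α : Type*} [DecidableEq α] (k M n : ℕ) (hn : 1 ≤ n) (hM : k + 1 ≤ M)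
    (E : Finset (List α)) (hEl : ∀ e ∈ E, e.length = k + 1)
    (P : List α → ℝ) (hsum : ∑ e ∈ E, P e = 1)
    (W : Fin n → List α) (hlen : ∀ j, (W j).length = M)
    (hA2 : ∀ r, r + (k + 1) ≤ M → ∀ e ∈ E,
      ((Finset.univ.filter
          (fun j : Fin n => ((W j).drop r).take (k + 1) = e)).card : ℝ) = P e * n)
    (ρ : Equiv.Perm (Fin n))
    (hext : ∀ j : Fin n, ∀ h : (j : ℕ) + 1 < n,
      (W (ρ j)).drop (M - k) = (W (ρ ⟨(j : ℕ) + 1, h⟩)).take k) :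
    ∀ e ∈ E,
      (((Finset.range ((stitchFold k (List.ofFn fun j => W (ρ j))).length - k)).filter
          (fun i => ((stitchFold k (List.ofFn fun j => W (ρ j))).drop i).take (k + 1)
            = e)).card : ℝ)
        = P e * n * ((M : ℝ) - k) ∧
      P e * n * ((M : ℝ) - k) = P e * (((n * M - (n - 1) * k : ℕ) : ℝ) - k) :=
  stmt7_general k M n hn hM E P W hlen hA2 ρ hext
end

section
/- Let G be a primitive subgraph of D_{1,2} with stationary Markov chain P, P(00) ≥ P(11), and let n be such that P is n-integral. Set n₁ = π(0)n, n₂ = π(1)n, n* = P(11)n. Let r, s be binary n-tuples each with n₁ zeros and n₂ ones, and let M be the number of indices j with r^j = s^j = 1. If M ≥ max(n*, P(11)n + P(10)n − P(00)n), then the path assignment of Table I is feasible: all six usage counts n₁ − 2n₂ + M + n*, n₂ − n*, n₂ − M (twice), n*, and M − n* are nonnegative, the paths used for 0–0 and 1–1 flows sum to the respective flow counts n₁ − n₂ + M and M, and the total usage of each edge e across launch and landing steps equals P(e)n each. -/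
/-- A directed graph on `{0,1}` (given by its edge set `E`) is primitive if for all
sufficiently large `N`, between every ordered pair of vertices there is a directed
path of length exactly `N`. -/
def IsPrimitive (E : Set (Bool × Bool)) : Prop :=
  ∃ N₀ : ℕ, ∀ N ≥ N₀, ∀ u v : Bool, ∃ f : ℕ → Bool,
    f 0 = u ∧ f N = v ∧ ∀ i < N, (f i, f (i + 1)) ∈ E

/-- Feasibility of the two-step transition (Table I).  Here
`false = 0` and `true = 1`; `n₁ = π(0)n`, `n₂ = π(1)n`, `n* = P(11)n`; `r, s` are
binary `n`-tuples each with `n₁` zeros and `n₂` ones, and `M` is the number of 1–1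
flows.  If `M ≥ max(n*, P(11)n + P(10)n − P(00)n)`, then all six path usage counts
are nonnegative, the paths for the 0–0 and 1–1 flows sum to the flow counts, and in
each of the two transition steps (launch/landing) the total usage of each edge `e`
is exactly `P(e)n`. -/
theorem stmt10 (E : Set (Bool × Bool)) (hprim : IsPrimitive E)
    (P : Bool × Bool → ℝ)
    (hsupp : ∀ e ∉ E, P e = 0) (hnn : ∀ e, 0 ≤ P e)
    (hsum : P (false, false) + P (false, true) + P (true, false) + P (true, true) = 1)
    (hstat : ∀ u : Bool, P (u, false) + P (u, true) = P (false, u) + P (true, u))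
    (hcase : P (true, true) ≤ P (false, false))
    (n : ℕ) (hint : ∀ e, ∃ z : ℤ, P e * n = (z : ℝ))
    (n₁ n₂ : ℕ)
    (hn1 : (n₁ : ℝ) = (P (false, false) + P (false, true)) * n)
    (hn2 : (n₂ : ℝ) = (P (true, false) + P (true, true)) * n)
    (r s : Fin n → Bool)
    (hr0 : (Finset.univ.filter (fun j => r j = false)).card = n₁)
    (hr1 : (Finset.univ.filter (fun j => r j = true)).card = n₂)
    (hs0 : (Finset.univ.filter (fun j => s j = false)).card = n₁)
    (hs1 : (Finset.univ.filter (fun j => s j = true)).card = n₂)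
    (M : ℕ)
    (hM : (Finset.univ.filter (fun j => r j = true ∧ s j = true)).card = M)
    (hMlb1 : P (true, true) * n ≤ (M : ℝ))
    (hMlb2 : P (true, true) * n + P (true, false) * n - P (false, false) * n ≤ (M : ℝ)) :
    -- nonnegativity of the six path usage counts
    (0 ≤ (n₁ : ℝ) - 2 * n₂ + M + P (true, true) * n) ∧
    (0 ≤ (n₂ : ℝ) - P (true, true) * n) ∧
    (0 ≤ (n₂ : ℝ) - M) ∧
    (0 ≤ P (true, true) * n) ∧
    (0 ≤ (M : ℝ) - P (true, true) * n) ∧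
    -- paths used for the 0–0 and 1–1 flows sum to the respective flow counts
    (((n₁ : ℝ) - 2 * n₂ + M + P (true, true) * n) + ((n₂ : ℝ) - P (true, true) * n)
        = (n₁ : ℝ) - n₂ + M) ∧
    ((P (true, true) * n) + ((M : ℝ) - P (true, true) * n) = (M : ℝ)) ∧
    -- launch step: total usage of each edge is P(e)n
    (((n₁ : ℝ) - 2 * n₂ + M + P (true, true) * n) + ((n₂ : ℝ) - M)
        = P (false, false) * n) ∧
    ((n₂ : ℝ) - P (true, true) * n = P (false, true) * n) ∧
    (((n₂ : ℝ) - M) + ((M : ℝ) - P (true, true) * n) = P (true, false) * n) ∧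
    -- landing step: total usage of each edge is P(e)n
    (((n₁ : ℝ) - 2 * n₂ + M + P (true, true) * n) + ((n₂ : ℝ) - M)
        = P (false, false) * n) ∧
    ((n₂ : ℝ) - P (true, true) * n = P (true, false) * n) ∧
    (((n₂ : ℝ) - M) + ((M : ℝ) - P (true, true) * n) = P (false, true) * n) := by
  have hpt : P (false, true) = P (true, false) := by
    have h := hstat false; simp at h; linarith
  have hMn2 : (M : ℝ) ≤ (n₂ : ℝ) := by
    have hsub : (Finset.univ.filter (fun j => r j = true ∧ s j = true))
        ⊆ (Finset.univ.filter (fun j : Fin n => s j = true)) := by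
      intro j hj
      simp only [Finset.mem_filter] at *
      exact ⟨hj.1, hj.2.2⟩
    have := Finset.card_le_card hsub
    rw [hM, hs1] at this
    exact_mod_cast this
  have h11 : (0:ℝ) ≤ P (true, true) * n := by
    have := hnn (true, true); positivity
  have h10 : (0:ℝ) ≤ P (true, false) * n := by
    have := hnn (true, false); positivity
  have hn1' : (n₁ : ℝ) = P (false, false) * n + P (false, true) * n := by
    rw [hn1]; ring
  have hn2' : (n₂ : ℝ) = P (true, false) * n + P (true, true) * n := by
    rw [hn2]; ring
  have hpt' : P (false, true) * n = P (true, false) * n := by rw [hpt]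
  refine ⟨by linarith, by linarith, by linarith, h11, by linarith,
    by ring, by ring, by linarith, by linarith, by linarith, by linarith,
    by linarith, by linarith⟩
end

section
/- In the 1–1 boosting procedure for the case M ≥ P(11)n, one iteration transforms a transition problem with M 1–1 flows into an intermediate transition problem with M' = M + P(00)n 1–1 flows, while preserving the property that each of the launch and landing steps uses each edge e of G exactly P(e)n times. -/
open Finset

section EdgeCount

variable {ι : Type*} [Fintype ι]

def edgeCount (x y : ι → Bool) (e : Bool × Bool) : ℕ :=
  #{j | (x j, y j) = e}

theorem edgeCount_true_true (x y : ι → Bool) :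
    edgeCount x y (true, true) = #{j | x j = true ∧ y j = true} := by
  simp only [edgeCount, Prod.mk.injEq]

theorem edgeCount_swap (x y : ι → Bool) (u v : Bool) :
    edgeCount y x (u, v) = edgeCount x y (v, u) := by
  simp only [edgeCount, Prod.mk.injEq, and_comm]

theorem edgeCount_add_edgeCount_eq_card_fst (x y : ι → Bool) (u : Bool) :
    edgeCount x y (u, false) + edgeCount x y (u, true) = #{j | x j = u} := by
  rw [← card_filter_add_card_filter_not (fun j => y j = true), filter_filter, filter_filter,
    edgeCount, edgeCount, add_comm]
  simp only [Prod.mk.injEq, Bool.not_eq_true]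

theorem edgeCount_add_edgeCount_eq_card_snd (x y : ι → Bool) (v : Bool) :
    edgeCount x y (false, v) + edgeCount x y (true, v) = #{j | y j = v} := by
  rw [edgeCount_swap y x false, edgeCount_swap y x true, edgeCount_add_edgeCount_eq_card_fst]

theorem edgeCount_false_false_add_card (x y : ι → Bool) :
    edgeCount x y (false, false) + #{j | y j = true} =
      #{j | x j = false} + edgeCount x y (true, true) := by
  have := edgeCount_add_edgeCount_eq_card_fst x y false
  have := edgeCount_add_edgeCount_eq_card_snd x y true
  omega

theorem edgeCount_eq_of_edgeCount_true {x y : ι → Bool} {m : Bool × Bool → ℕ}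
    (hx : ∀ u, #{j | x j = u} = m (u, false) + m (u, true))
    (hy : ∀ u, edgeCount x y (u, true) = m (u, true)) : edgeCount x y = m := by
  funext ⟨u, v⟩
  have := edgeCount_add_edgeCount_eq_card_fst x y u
  cases v <;> grind

theorem edgeCount_mem_union_eq [DecidableEq ι] {x : ι → Bool} {m : Bool × Bool → ℕ}
    (hx : ∀ u, #{j | x j = u} = m (u, false) + m (u, true)) {A Z : Finset ι}
    (hA : ∀ j ∈ A, x j = true) (hZ : ∀ j ∈ Z, x j = false)
    (hAcard : #A = m (true, true)) (hZcard : #Z = m (false, true)) :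
    edgeCount x (fun j => decide (j ∈ A ∪ Z)) = m := by
  refine edgeCount_eq_of_edgeCount_true hx fun u => ?_
  cases u <;> [rw [← hZcard, edgeCount]; rw [← hAcard, edgeCount]] <;> congr 1 <;> ext j <;>
    simp only [mem_filter, mem_univ, true_and, Prod.mk.injEq, decide_eq_true_eq, mem_union] <;>
    grind

theorem exists_boosting_rows [DecidableEq ι] (r s : ι → Bool)
    {m : Bool × Bool → ℕ} (hm : m (false, true) = m (true, false))
    (hr : ∀ u, #{j | r j = u} = m (u, false) + m (u, true))
    (hs : ∀ u, #{j | s j = u} = m (u, false) + m (u, true))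
    (hlb : m (true, true) ≤ edgeCount r s (true, true))
    (hub : edgeCount r s (true, true) + m (false, false) ≤ m (true, false) + m (true, true)) :
    ∃ r' s' : ι → Bool, edgeCount r r' = m ∧ edgeCount s' s = m ∧
      edgeCount r' s' (true, true) = edgeCount r s (true, true) + m (false, false) := by
  have hD := edgeCount_false_false_add_card r s
  rw [hr, hs] at hD
  set D : Finset ι := {j | (r j, s j) = (false, false)}
  change #D + _ = _ at hD
  have hDle : #D ≤ m (false, true) := by omega
  obtain ⟨A, hAsub, hAcard⟩ := exists_subset_card_eq hlb
  have hA : ∀ j ∈ A, r j = true ∧ s j = true := fun j hj => by simpa using hAsub hj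
  obtain ⟨Zr, hDZr, hZr, hZrcard⟩ := exists_subsuperset_card_eq
    (s := D) (t := {j | r j = false}) (n := m (false, true))
    (fun j => by simp +contextual [D]) hDle (by rw [hr]; omega)
  obtain ⟨Zs, hDZs, hZs, hZscard⟩ := exists_subsuperset_card_eq
    (s := D) (t := {j | s j = false}) (n := m (false, true))
    (fun j => by simp +contextual [D]) hDle (by rw [hs]; omega)
  refine ⟨fun j => decide (j ∈ A ∪ Zr), fun j => decide (j ∈ A ∪ Zs), ?_, ?_, ?_⟩
  · exact edgeCount_mem_union_eq hr (fun j hj => (hA j hj).1)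
      (fun j hj => by simpa using hZr hj) hAcard hZrcard
  · funext ⟨u, v⟩
    rw [edgeCount_swap, edgeCount_mem_union_eq hs (fun j hj => (hA j hj).2)
      (fun j hj => by simpa using hZs hj) hAcard hZscard]
    cases u <;> cases v <;> simp [hm]
  · have hZ : Zr ∩ Zs = D := (subset_inter hDZr hDZs).antisymm' fun j hj => by
      have := hZr (mem_inter.1 hj).1
      have := hZs (mem_inter.1 hj).2
      simp_all [D]
    have hinter : ({j | decide (j ∈ A ∪ Zr) = true ∧ decide (j ∈ A ∪ Zs) = true} : Finset ι) =
        A ∪ D := by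
      rw [← hZ, union_inter_distrib_left]
      ext j
      simp
    have hdisj : Disjoint A D :=
      disjoint_left.2 fun j hjA hjD => by simp_all [D]
    rw [edgeCount_true_true, hinter, card_union_of_disjoint hdisj, hAcard]
    omega

end EdgeCount

theorem exists_nat_eq_of_nonneg_of_int {x : ℝ} (hx : 0 ≤ x) (h : ∃ z : ℤ, x = z) :
    ∃ k : ℕ, x = k := by
  obtain ⟨z, rfl⟩ := h
  lift z to ℕ using (by exact_mod_cast hx)
  exact ⟨z, by simp⟩

theorem stmt12_general
    (P : Bool × Bool → ℝ)
    (hnn : ∀ e, 0 ≤ P e)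
    (hstat : ∀ u : Bool, P (u, false) + P (u, true) = P (false, u) + P (true, u))
    (n : ℕ) (hint : ∀ e, ∃ z : ℤ, P e * n = (z : ℝ))
    (n₁ n₂ : ℕ)
    (hn1 : (n₁ : ℝ) = (P (false, false) + P (false, true)) * n)
    (hn2 : (n₂ : ℝ) = (P (true, false) + P (true, true)) * n)
    (r s : Fin n → Bool)
    (hr0 : (Finset.univ.filter (fun j => r j = false)).card = n₁)
    (hr1 : (Finset.univ.filter (fun j => r j = true)).card = n₂)
    (hs0 : (Finset.univ.filter (fun j => s j = false)).card = n₁)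
    (hs1 : (Finset.univ.filter (fun j => s j = true)).card = n₂)
    (M : ℕ)
    (hM : (Finset.univ.filter (fun j => r j = true ∧ s j = true)).card = M)
    (hMlb : P (true, true) * n ≤ (M : ℝ))
    (hMub : (M : ℝ) < P (true, true) * n + P (true, false) * n - P (false, false) * n) :
    ∃ r' s' : Fin n → Bool,
      (∀ e : Bool × Bool,
        ((Finset.univ.filter (fun j => (r j, r' j) = e)).card : ℝ) = P e * n) ∧
      (∀ e : Bool × Bool,
        ((Finset.univ.filter (fun j => (s' j, s j) = e)).card : ℝ) = P e * n) ∧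
      ((Finset.univ.filter (fun j => r' j = true ∧ s' j = true)).card : ℝ)
        = (M : ℝ) + P (false, false) * n := by
  choose m hm using fun e =>
    exists_nat_eq_of_nonneg_of_int (mul_nonneg (hnn e) n.cast_nonneg) (hint e)
  have hsym : m (false, true) = m (true, false) := by
    rw [← Nat.cast_inj (R := ℝ), ← hm, ← hm]
    congr 1
    linarith [hstat false]
  obtain rfl : n₁ = m (false, false) + m (false, true) := by
    rw [← Nat.cast_inj (R := ℝ), hn1]; push_cast; rw [← hm, ← hm]; ring
  obtain rfl : n₂ = m (true, false) + m (true, true) := by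
    rw [← Nat.cast_inj (R := ℝ), hn2]; push_cast; rw [← hm, ← hm]; ring
  have hrow : ∀ x : Fin n → Bool, #{j | x j = false} = m (false, false) + m (false, true) →
      #{j | x j = true} = m (true, false) + m (true, true) →
      ∀ u, #{j | x j = u} = m (u, false) + m (u, true) := by
    rintro x h0 h1 (_ | _) <;> assumption
  have hMlb' : m (true, true) ≤ M := by exact_mod_cast hm (true, true) ▸ hMlb
  have hMub' : M + m (false, false) ≤ m (true, false) + m (true, true) := by
    have : (M : ℝ) + m (false, false) < m (true, false) + m (true, true) := by
      rw [← hm, ← hm, ← hm]; linarith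
    exact_mod_cast this.le
  obtain ⟨r', s', hlaunch, hland, hflow⟩ := exists_boosting_rows r s hsym
    (hrow r hr0 hr1) (hrow s hs0 hs1) (by rwa [edgeCount_true_true, hM])
    (by rwa [edgeCount_true_true, hM])
  refine ⟨r', s', fun e => ?_, fun e => ?_, ?_⟩
  · rw [hm]; exact_mod_cast congrFun hlaunch e
  · rw [hm]; exact_mod_cast congrFun hland e
  · rw [← edgeCount_true_true, hflow, edgeCount_true_true, hM, hm]; push_cast; rfl

/-- 1–1 boosting in the case `M ≥ P(11)n` (with `M` below the lower
bound `P(11)n + P(10)n − P(00)n`, which is when boosting is invoked).  One iteration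
produces a launch row `r'` and a landing row `s'` such that the launch step `r → r'`
and the landing step `s' → s` each use every edge `e` exactly `P(e)n` times, and the
intermediate transition problem from `r'` to `s'` has `M' = M + P(00)n` 1–1 flows. -/
theorem stmt12 (E : Set (Bool × Bool)) (hprim : IsPrimitive E)
    (P : Bool × Bool → ℝ)
    (hsupp : ∀ e ∉ E, P e = 0) (hnn : ∀ e, 0 ≤ P e)
    (hsum : P (false, false) + P (false, true) + P (true, false) + P (true, true) = 1)
    (hstat : ∀ u : Bool, P (u, false) + P (u, true) = P (false, u) + P (true, u))
    (hcase : P (true, true) ≤ P (false, false))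
    (n : ℕ) (hint : ∀ e, ∃ z : ℤ, P e * n = (z : ℝ))
    (n₁ n₂ : ℕ)
    (hn1 : (n₁ : ℝ) = (P (false, false) + P (false, true)) * n)
    (hn2 : (n₂ : ℝ) = (P (true, false) + P (true, true)) * n)
    (r s : Fin n → Bool)
    (hr0 : (Finset.univ.filter (fun j => r j = false)).card = n₁)
    (hr1 : (Finset.univ.filter (fun j => r j = true)).card = n₂)
    (hs0 : (Finset.univ.filter (fun j => s j = false)).card = n₁)
    (hs1 : (Finset.univ.filter (fun j => s j = true)).card = n₂)
    (M : ℕ)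
    (hM : (Finset.univ.filter (fun j => r j = true ∧ s j = true)).card = M)
    (hMlb : P (true, true) * n ≤ (M : ℝ))
    (hMub : (M : ℝ) < P (true, true) * n + P (true, false) * n - P (false, false) * n) :
    ∃ r' s' : Fin n → Bool,
      (∀ e : Bool × Bool,
        ((Finset.univ.filter (fun j => (r j, r' j) = e)).card : ℝ) = P e * n) ∧
      (∀ e : Bool × Bool,
        ((Finset.univ.filter (fun j => (s' j, s j) = e)).card : ℝ) = P e * n) ∧
      ((Finset.univ.filter (fun j => r' j = true ∧ s' j = true)).card : ℝ)
        = (M : ℝ) + P (false, false) * n :=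
  stmt12_general P hnn hstat n hint n₁ n₂ hn1 hn2 r s hr0 hr1 hs0 hs1 M hM hMlb hMub
end

section
/- In the 1–1 boosting procedure for the case M < P(11)n with P(11)n − M ≥ P(10)n, one iteration transforms a transition problem with M 1–1 flows into an intermediate transition problem with M' = M + 2·P(10)n 1–1 flows. -/
/-- 1–1 boosting in the case `M < P(11)n` with `P(11)n − M ≥ P(10)n`.
One iteration produces a launch row `r'` and a landing row `s'` such that the launch
step `r → r'` and the landing step `s' → s` each use every edge `e` exactly `P(e)n`
times, and the intermediate transition problem from `r'` to `s'` has
`M' = M + 2·P(10)n` 1–1 flows. -/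
theorem stmt13 (E : Set (Bool × Bool)) (hprim : IsPrimitive E)
    (P : Bool × Bool → ℝ)
    (hsupp : ∀ e ∉ E, P e = 0) (hnn : ∀ e, 0 ≤ P e)
    (hsum : P (false, false) + P (false, true) + P (true, false) + P (true, true) = 1)
    (hstat : ∀ u : Bool, P (u, false) + P (u, true) = P (false, u) + P (true, u))
    (n : ℕ) (hint : ∀ e, ∃ z : ℤ, P e * n = (z : ℝ))
    (n₁ n₂ : ℕ)
    (hn1 : (n₁ : ℝ) = (P (false, false) + P (false, true)) * n)
    (hn2 : (n₂ : ℝ) = (P (true, false) + P (true, true)) * n)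
    (r s : Fin n → Bool)
    (hr0 : (Finset.univ.filter (fun j => r j = false)).card = n₁)
    (hr1 : (Finset.univ.filter (fun j => r j = true)).card = n₂)
    (hs0 : (Finset.univ.filter (fun j => s j = false)).card = n₁)
    (hs1 : (Finset.univ.filter (fun j => s j = true)).card = n₂)
    (M : ℕ)
    (hM : (Finset.univ.filter (fun j => r j = true ∧ s j = true)).card = M)
    (hMub : (M : ℝ) < P (true, true) * n)
    (hgap : P (true, false) * n ≤ P (true, true) * n - (M : ℝ)) :
    ∃ r' s' : Fin n → Bool,
      (∀ e : Bool × Bool,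
        ((Finset.univ.filter (fun j => (r j, r' j) = e)).card : ℝ) = P e * n) ∧
      (∀ e : Bool × Bool,
        ((Finset.univ.filter (fun j => (s' j, s j) = e)).card : ℝ) = P e * n) ∧
      ((Finset.univ.filter (fun j => r' j = true ∧ s' j = true)).card : ℝ)
        = (M : ℝ) + 2 * (P (true, false) * n) := by
  classical
  -- natural number values of P e * n
  have hPn : ∀ e, ∃ m : ℕ, (m : ℝ) = P e * n := by
    intro e
    obtain ⟨z, hz⟩ := hint e
    have h0 : (0:ℤ) ≤ z := by
      have : (0:ℝ) ≤ (z:ℝ) := hz ▸ mul_nonneg (hnn e) (Nat.cast_nonneg n)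
      exact_mod_cast this
    refine ⟨z.toNat, ?_⟩
    rw [hz]
    exact_mod_cast congrArg (Int.cast : ℤ → ℝ) (Int.toNat_of_nonneg h0)
  obtain ⟨a, ha⟩ := hPn (false, false)
  obtain ⟨b, hb⟩ := hPn (false, true)
  obtain ⟨c, hc⟩ := hPn (true, false)
  obtain ⟨d, hd⟩ := hPn (true, true)
  have hst : P (true, false) = P (false, true) := by
    have h1 := hstat true; linarith
  have hbc : b = c := by
    have : (b:ℝ) = (c:ℝ) := by rw [hb, hc, hst]
    exact_mod_cast this
  have hn1' : n₁ = a + b := by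
    have : (n₁:ℝ) = ((a + b : ℕ) : ℝ) := by push_cast [ha, hb]; rw [hn1]; ring
    exact_mod_cast this
  have hn2' : n₂ = c + d := by
    have : (n₂:ℝ) = ((c + d : ℕ) : ℝ) := by push_cast [hc, hd]; rw [hn2]; ring
    exact_mod_cast this
  have hMd : M < d := by
    have : (M:ℝ) < (d:ℝ) := by rw [hd]; exact hMub
    exact_mod_cast this
  have hcMd : c + M ≤ d := by
    have : (c:ℝ) + (M:ℝ) ≤ (d:ℝ) := by rw [hc, hd]; linarith
    exact_mod_cast this
  -- the four column classes
  set A := Finset.univ.filter (fun j : Fin n => r j = true ∧ s j = true) with hAdef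
  set B := Finset.univ.filter (fun j : Fin n => r j = true ∧ s j = false) with hBdef
  set C := Finset.univ.filter (fun j : Fin n => r j = false ∧ s j = true) with hCdef
  set D := Finset.univ.filter (fun j : Fin n => r j = false ∧ s j = false) with hDdef
  have hAm : ∀ j, j ∈ A ↔ r j = true ∧ s j = true := by intro j; simp [hAdef]
  have hBm : ∀ j, j ∈ B ↔ r j = true ∧ s j = false := by intro j; simp [hBdef]
  have hCm : ∀ j, j ∈ C ↔ r j = false ∧ s j = true := by intro j; simp [hCdef]
  have hDm : ∀ j, j ∈ D ↔ r j = false ∧ s j = false := by intro j; simp [hDdef]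
  have hdAB : Disjoint A B := by
    rw [Finset.disjoint_left]; intro j h1 h2
    have := (hAm j).1 h1; have := (hBm j).1 h2; simp_all
  have hdCD : Disjoint C D := by
    rw [Finset.disjoint_left]; intro j h1 h2
    have := (hCm j).1 h1; have := (hDm j).1 h2; simp_all
  have hdAC : Disjoint A C := by
    rw [Finset.disjoint_left]; intro j h1 h2
    have := (hAm j).1 h1; have := (hCm j).1 h2; simp_all
  have hdBD : Disjoint B D := by
    rw [Finset.disjoint_left]; intro j h1 h2
    have := (hBm j).1 h1; have := (hDm j).1 h2; simp_all
  -- cardinalities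
  have hAB : A.card + B.card = n₂ := by
    rw [← Finset.card_union_of_disjoint hdAB, ← hr1]
    congr 1
    ext j
    simp only [Finset.mem_union, hAm, hBm, Finset.mem_filter, Finset.mem_univ, true_and]
    cases s j <;> simp
  have hAC : A.card + C.card = n₂ := by
    rw [← Finset.card_union_of_disjoint hdAC, ← hs1]
    congr 1
    ext j
    simp only [Finset.mem_union, hAm, hCm, Finset.mem_filter, Finset.mem_univ, true_and]
    cases r j <;> simp [and_comm]
  have hCD : C.card + D.card = n₁ := by
    rw [← Finset.card_union_of_disjoint hdCD, ← hr0]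
    congr 1
    ext j
    simp only [Finset.mem_union, hCm, hDm, Finset.mem_filter, Finset.mem_univ, true_and]
    cases s j <;> simp
  -- pick the subsets
  obtain ⟨B₁, hB₁sub, hB₁card⟩ := Finset.exists_subset_card_eq (s := B) (n := d - M) (by omega)
  obtain ⟨B₂, hB₂sub, hB₂card⟩ := Finset.exists_subset_card_eq (s := B₁) (n := c) (by omega)
  obtain ⟨C₁, hC₁sub, hC₁card⟩ := Finset.exists_subset_card_eq (s := C) (n := d - M) (by omega)
  obtain ⟨C₂, hC₂sub, hC₂card⟩ := Finset.exists_subset_card_eq (s := C₁) (n := c) (by omega)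
  have hB₁f : ∀ j ∈ B₁, r j = true ∧ s j = false := fun j hj => (hBm j).1 (hB₁sub hj)
  have hB₂f : ∀ j ∈ B₂, j ∈ B₁ := fun j hj => hB₂sub hj
  have hC₁f : ∀ j ∈ C₁, r j = false ∧ s j = true := fun j hj => (hCm j).1 (hC₁sub hj)
  have hC₂f : ∀ j ∈ C₂, j ∈ C₁ := fun j hj => hC₂sub hj
  have hB₂B : B₂ ⊆ B := hB₂sub.trans hB₁sub
  have hC₂C : C₂ ⊆ C := hC₂sub.trans hC₁sub
  refine ⟨fun j => decide (j ∈ A ∪ B₁ ∪ C₂), fun j => decide (j ∈ A ∪ C₁ ∪ B₂), ?_, ?_, ?_⟩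
  · rintro ⟨u, v⟩
    cases u <;> cases v
    · -- edge (false,false): (C \ C₂) ∪ D
      rw [← ha]
      have hset : (Finset.univ.filter fun j => ((r j, decide (j ∈ A ∪ B₁ ∪ C₂)) = ((false:Bool),(false:Bool)))) = (C \ C₂) ∪ D := by
        ext j
        simp only [Finset.mem_filter, Finset.mem_univ, true_and, Prod.mk.injEq,
          decide_eq_false_iff_not, Finset.mem_union, Finset.mem_sdiff, hAm, hBm, hCm, hDm]
        constructor
        · rintro ⟨hr, h⟩
          push_neg at h
          obtain ⟨⟨h1, h2⟩, h3⟩ := h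
          cases hsj : s j
          · exact Or.inr ⟨hr, rfl⟩
          · exact Or.inl ⟨⟨hr, rfl⟩, h3⟩
        · rintro (⟨⟨h1, h2⟩, h3⟩ | ⟨h1, h2⟩)
          · refine ⟨h1, ?_⟩
            push_neg
            refine ⟨⟨by simp [h1, h2], ?_⟩, h3⟩
            intro hb1; exact absurd (hB₁f j hb1).1 (by simp [h1])
          · refine ⟨h1, ?_⟩
            push_neg
            refine ⟨⟨by simp [h1, h2], ?_⟩, ?_⟩
            · intro hb1; exact absurd (hB₁f j hb1).1 (by simp [h1])
            · intro hc2; exact absurd (hC₁f j (hC₂f j hc2)).2 (by simp [h2])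
      rw [hset, Finset.card_union_of_disjoint, Finset.card_sdiff_of_subset hC₂C]
      · have : C.card - C₂.card + D.card = a := by omega
        exact_mod_cast this
      · exact Finset.disjoint_of_subset_left (Finset.sdiff_subset) hdCD
    · -- edge (false,true): C₂
      rw [← hst, ← hc]
      have hset : (Finset.univ.filter fun j => ((r j, decide (j ∈ A ∪ B₁ ∪ C₂)) = ((false:Bool),(true:Bool)))) = C₂ := by
        ext j
        simp only [Finset.mem_filter, Finset.mem_univ, true_and, Prod.mk.injEq,
          decide_eq_true_eq, Finset.mem_union, hAm]
        constructor
        · rintro ⟨hr, (h | h) | h⟩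
          · exact absurd h.1 (by simp [hr])
          · exact absurd (hB₁f j h).1 (by simp [hr])
          · exact h
        · intro h
          exact ⟨(hC₁f j (hC₂f j h)).1, Or.inr h⟩
      rw [hset, hC₂card]
    · -- edge (true,false): B \ B₁
      rw [← hc]
      have hset : (Finset.univ.filter fun j => ((r j, decide (j ∈ A ∪ B₁ ∪ C₂)) = ((true:Bool),(false:Bool)))) = B \ B₁ := by
        ext j
        simp only [Finset.mem_filter, Finset.mem_univ, true_and, Prod.mk.injEq,
          decide_eq_false_iff_not, Finset.mem_union, Finset.mem_sdiff, hAm, hBm]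
        constructor
        · rintro ⟨hr, h⟩
          push_neg at h
          obtain ⟨⟨h1, h2⟩, h3⟩ := h
          cases hsj : s j
          · exact ⟨⟨hr, rfl⟩, h2⟩
          · exact absurd hsj (h1 hr)
        · rintro ⟨⟨h1, h2⟩, h3⟩
          refine ⟨h1, ?_⟩
          push_neg
          refine ⟨⟨by simp [h2], h3⟩, ?_⟩
          intro hc2; exact absurd (hC₁f j (hC₂f j hc2)).1 (by simp [h1])
      rw [hset, Finset.card_sdiff_of_subset hB₁sub]
      have : B.card - B₁.card = c := by omega
      exact_mod_cast this
    · -- edge (true,true): A ∪ B₁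
      rw [← hd]
      have hset : (Finset.univ.filter fun j => ((r j, decide (j ∈ A ∪ B₁ ∪ C₂)) = ((true:Bool),(true:Bool)))) = A ∪ B₁ := by
        ext j
        simp only [Finset.mem_filter, Finset.mem_univ, true_and, Prod.mk.injEq,
          decide_eq_true_eq, Finset.mem_union]
        constructor
        · rintro ⟨hr, (h | h) | h⟩
          · exact Or.inl h
          · exact Or.inr h
          · exact absurd (hC₁f j (hC₂f j h)).1 (by simp [hr])
        · rintro (h | h)
          · exact ⟨((hAm j).1 h).1, Or.inl (Or.inl h)⟩
          · exact ⟨(hB₁f j h).1, Or.inl (Or.inr h)⟩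
      rw [hset, Finset.card_union_of_disjoint]
      · have : A.card + B₁.card = d := by omega
        exact_mod_cast this
      · exact Finset.disjoint_of_subset_right hB₁sub hdAB
  · rintro ⟨u, v⟩
    cases u <;> cases v
    · -- landing edge (false,false): (B \ B₂) ∪ D
      rw [← ha]
      have hset : (Finset.univ.filter fun j => ((decide (j ∈ A ∪ C₁ ∪ B₂), s j) = ((false:Bool),(false:Bool)))) = (B \ B₂) ∪ D := by
        ext j
        simp only [Finset.mem_filter, Finset.mem_univ, true_and, Prod.mk.injEq,
          decide_eq_false_iff_not, Finset.mem_union, Finset.mem_sdiff, hAm, hBm, hDm]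
        constructor
        · rintro ⟨h, hs⟩
          push_neg at h
          obtain ⟨⟨h1, h2⟩, h3⟩ := h
          cases hrj : r j
          · exact Or.inr ⟨rfl, hs⟩
          · exact Or.inl ⟨⟨rfl, hs⟩, h3⟩
        · rintro (⟨⟨h1, h2⟩, h3⟩ | ⟨h1, h2⟩)
          · refine ⟨?_, h2⟩
            push_neg
            refine ⟨⟨by simp [h1, h2], ?_⟩, h3⟩
            intro hc1; exact absurd (hC₁f j hc1).1 (by simp [h1])
          · refine ⟨?_, h2⟩
            push_neg
            refine ⟨⟨by simp [h1, h2], ?_⟩, ?_⟩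
            · intro hc1; exact absurd (hC₁f j hc1).2 (by simp [h2])
            · intro hb2; exact absurd (hB₁f j (hB₂f j hb2)).1 (by simp [h1])
      rw [hset, Finset.card_union_of_disjoint, Finset.card_sdiff_of_subset hB₂B]
      · have : B.card - B₂.card + D.card = a := by omega
        exact_mod_cast this
      · exact Finset.disjoint_of_subset_left (Finset.sdiff_subset) hdBD
    · -- landing edge (false,true): C \ C₁
      rw [← hst, ← hc]
      have hset : (Finset.univ.filter fun j => ((decide (j ∈ A ∪ C₁ ∪ B₂), s j) = ((false:Bool),(true:Bool)))) = C \ C₁ := by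
        ext j
        simp only [Finset.mem_filter, Finset.mem_univ, true_and, Prod.mk.injEq,
          decide_eq_false_iff_not, Finset.mem_union, Finset.mem_sdiff, hAm, hCm]
        constructor
        · rintro ⟨h, hs⟩
          push_neg at h
          obtain ⟨⟨h1, h2⟩, h3⟩ := h
          cases hrj : r j
          · exact ⟨⟨rfl, hs⟩, h2⟩
          · exact absurd hs (h1 hrj)
        · rintro ⟨⟨h1, h2⟩, h3⟩
          refine ⟨?_, h2⟩
          push_neg
          refine ⟨⟨by simp [h1], h3⟩, ?_⟩
          intro hb2; exact absurd (hB₁f j (hB₂f j hb2)).2 (by simp [h2])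
      rw [hset, Finset.card_sdiff_of_subset hC₁sub]
      have : C.card - C₁.card = c := by omega
      exact_mod_cast this
    · -- landing edge (true,false): B₂
      rw [← hc]
      have hset : (Finset.univ.filter fun j => ((decide (j ∈ A ∪ C₁ ∪ B₂), s j) = ((true:Bool),(false:Bool)))) = B₂ := by
        ext j
        simp only [Finset.mem_filter, Finset.mem_univ, true_and, Prod.mk.injEq,
          decide_eq_true_eq, Finset.mem_union, hAm]
        constructor
        · rintro ⟨(h | h) | h, hs⟩
          · exact absurd h.2 (by simp [hs])
          · exact absurd (hC₁f j h).2 (by simp [hs])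
          · exact h
        · intro h
          exact ⟨Or.inr h, (hB₁f j (hB₂f j h)).2⟩
      rw [hset, hB₂card]
    · -- landing edge (true,true): A ∪ C₁
      rw [← hd]
      have hset : (Finset.univ.filter fun j => ((decide (j ∈ A ∪ C₁ ∪ B₂), s j) = ((true:Bool),(true:Bool)))) = A ∪ C₁ := by
        ext j
        simp only [Finset.mem_filter, Finset.mem_univ, true_and, Prod.mk.injEq,
          decide_eq_true_eq, Finset.mem_union]
        constructor
        · rintro ⟨(h | h) | h, hs⟩
          · exact Or.inl h
          · exact Or.inr h
          · exact absurd (hB₁f j (hB₂f j h)).2 (by simp [hs])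
        · rintro (h | h)
          · exact ⟨Or.inl (Or.inl h), ((hAm j).1 h).2⟩
          · exact ⟨Or.inl (Or.inr h), (hC₁f j h).2⟩
      rw [hset, Finset.card_union_of_disjoint]
      · have : A.card + C₁.card = d := by omega
        exact_mod_cast this
      · exact Finset.disjoint_of_subset_right hC₁sub hdAC
  · -- the overlap count
    rw [← hc]
    have hset : (Finset.univ.filter fun j => decide (j ∈ A ∪ B₁ ∪ C₂) = true ∧ decide (j ∈ A ∪ C₁ ∪ B₂) = true) = A ∪ B₂ ∪ C₂ := by
      ext j
      simp only [Finset.mem_filter, Finset.mem_univ, true_and, decide_eq_true_eq,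
        Finset.mem_union]
      constructor
      · rintro ⟨(h1 | h1) | h1, (h2 | h2) | h2⟩
        · exact Or.inl (Or.inl h1)
        · exact Or.inl (Or.inl h1)
        · exact Or.inl (Or.inl h1)
        · exact Or.inl (Or.inl h2)
        · exact absurd (hC₁f j h2).1 (by simp [(hB₁f j h1).1])
        · exact Or.inl (Or.inr h2)
        · exact Or.inl (Or.inl h2)
        · exact Or.inr h1
        · exact Or.inr h1
      · rintro ((h | h) | h)
        · exact ⟨Or.inl (Or.inl h), Or.inl (Or.inl h)⟩
        · exact ⟨Or.inl (Or.inr (hB₂f j h)), Or.inr h⟩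
        · exact ⟨Or.inr h, Or.inl (Or.inr (hC₂f j h))⟩
    rw [hset]
    have hd1 : Disjoint A B₂ := Finset.disjoint_of_subset_right (hB₂sub.trans hB₁sub) hdAB
    have hd2 : Disjoint (A ∪ B₂) C₂ := by
      refine Finset.disjoint_union_left.2 ⟨?_, ?_⟩
      · exact Finset.disjoint_of_subset_right (hC₂sub.trans hC₁sub) hdAC
      · rw [Finset.disjoint_left]
        intro j h1 h2
        exact absurd (hC₁f j (hC₂f j h2)).1 (by simp [(hB₁f j (hB₂sub h1)).1])
    rw [Finset.card_union_of_disjoint hd2, Finset.card_union_of_disjoint hd1, hB₂card, hC₂card, hM]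
    push_cast
    ring
end
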